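/- arXiv:1604.02435 — 2 statements merged into one kernel-verified Lean document; each statement's English description precedes it below -/
import Mathlib

section
/- Let (d_n) be a strictly increasing sequence of nonnegative reals tending to infinity with d_1 = 0. The set P(F) of probability mass functions ρ on ℕ satisfying Σ_n d_n ρ(n) ≤ F is a compact subset of ℓ^∞ under the sup norm, for every F ≥ 0. -/
open Finset Filter Topology Set

theorem stmt_7 (d : ℕ → ℝ) (hd0 : ∀ n, 0 ≤ d n) (hmono : StrictMono d)
    (htop : Filter.Tendsto d Filter.atTop Filter.atTop) (hd1 : d 0 = 0)
    (F : ℝ) (hF : 0 ≤ F) :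
    IsCompact {ρ : lp (fun _ : ℕ => ℝ) ⊤ |
      (∀ n, 0 ≤ ρ n) ∧ HasSum (fun n => ρ n) 1 ∧
      ∃ S ≤ F, HasSum (fun n => d n * ρ n) S} := by
  classical
  -- the "box with constraints" in the product space
  set K : Set (ℕ → ℝ) := {x | (∀ n, x n ∈ Set.Icc (0:ℝ) 1) ∧
      (∀ N, ∑ n ∈ Finset.range N, x n ≤ 1) ∧
      (∀ N, ∑ n ∈ Finset.range N, d n * x n ≤ F) ∧
      (∀ N, 0 < d N → 1 - F / d N ≤ ∑ n ∈ Finset.range N, x n)} with hKdef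
  -- positivity of d away from 0
  have hdpos : ∀ n, 0 < n → 0 < d n := fun n hn => hd1 ▸ hmono hn
  -- Markov coordinate bound inside K
  have hmarkov : ∀ x ∈ K, ∀ n, 0 < d n → x n ≤ F / d n := by
    rintro x ⟨h1, _, h3, _⟩ n hdn
    rw [le_div_iff₀ hdn, mul_comm]
    calc d n * x n ≤ ∑ m ∈ Finset.range (n+1), d m * x m := by
          refine Finset.single_le_sum (fun m _ => mul_nonneg (hd0 m) (h1 m).1) ?_
          exact Finset.mem_range.2 (Nat.lt_succ_self n)
      _ ≤ F := h3 (n+1)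
  have hmem : ∀ x ∈ K, Memℓp x ⊤ := by
    rintro x ⟨h1, -, -, -⟩
    refine memℓp_infty ⟨1, ?_⟩
    rintro r ⟨n, rfl⟩
    show ‖x n‖ ≤ 1
    rw [Real.norm_eq_abs, abs_of_nonneg (h1 n).1]
    exact (h1 n).2
  -- K is compact
  have hKc : IsCompact K := by
    have hsub : K ⊆ Set.pi Set.univ (fun _ : ℕ => Set.Icc (0:ℝ) 1) := by
      rintro x ⟨h1, -⟩ n _; exact h1 n
    refine IsCompact.of_isClosed_subset (isCompact_univ_pi fun _ => isCompact_Icc) ?_ hsub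
    have c1 : IsClosed {x : ℕ → ℝ | ∀ n, x n ∈ Set.Icc (0:ℝ) 1} := by
      rw [Set.setOf_forall]
      exact isClosed_iInter fun n => IsClosed.preimage (continuous_apply n) isClosed_Icc
    have c2 : IsClosed {x : ℕ → ℝ | ∀ N, ∑ n ∈ Finset.range N, x n ≤ 1} := by
      rw [Set.setOf_forall]
      exact isClosed_iInter fun N =>
        isClosed_le (continuous_finset_sum _ fun i _ => continuous_apply i) continuous_const
    have c3 : IsClosed {x : ℕ → ℝ | ∀ N, ∑ n ∈ Finset.range N, d n * x n ≤ F} := by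
      rw [Set.setOf_forall]
      exact isClosed_iInter fun N =>
        isClosed_le (continuous_finset_sum _ fun i _ => continuous_const.mul (continuous_apply i))
          continuous_const
    have c4 : IsClosed {x : ℕ → ℝ | ∀ N, 0 < d N → 1 - F / d N ≤ ∑ n ∈ Finset.range N, x n} := by
      rw [Set.setOf_forall]
      refine isClosed_iInter fun N => ?_
      by_cases h : 0 < d N
      · simp only [h, forall_true_left]
        exact isClosed_le continuous_const (continuous_finset_sum _ fun i _ => continuous_apply i)
      · simp only [h, false_implies, Set.setOf_true]
        exact isClosed_univ
    have : K = _ ∩ (_ ∩ (_ ∩ _)) := rfl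
    exact this ▸ c1.inter (c2.inter (c3.inter c4))
  -- the inclusion map
  set Φ : (ℕ → ℝ) → lp (fun _ : ℕ => ℝ) ⊤ :=
    fun x => if h : Memℓp x ⊤ then (⟨x, h⟩ : lp (fun _ : ℕ => ℝ) ⊤) else 0 with hΦdef
  have hΦval : ∀ x (h : Memℓp x ⊤), Φ x = (⟨x, h⟩ : lp (fun _ : ℕ => ℝ) ⊤) := by
    intro x h; simp [hΦdef, h]
  -- continuity of Φ on K
  have hΦcont : ContinuousOn Φ K := by
    intro x hx
    have hxmem := hmem x hx
    rw [ContinuousWithinAt, Metric.tendsto_nhds]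
    intro ε hε
    -- choose N so that F / d N < ε / 4
    obtain ⟨N, hN⟩ := (htop.eventually (eventually_ge_atTop (4 * F / ε + 1))).exists
    have hdN : 0 < d N := lt_of_lt_of_le (by positivity) hN
    have hFdN : F / d N < ε / 4 := by
      rw [div_lt_iff₀ hdN]
      have he : ε / 4 * (4 * F / ε + 1) = F + ε / 4 := by
        field_simp
      nlinarith [mul_le_mul_of_nonneg_left hN (le_of_lt (show (0:ℝ) < ε/4 by positivity))]
    -- neighborhood controlling the first N coordinates
    have hV : ∀ᶠ y in 𝓝 x, ∀ n ∈ Set.Iio N, dist (y n) (x n) < ε / 4 := by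
      rw [Filter.eventually_all_finite (Set.finite_Iio N)]
      intro n _
      exact (continuous_apply n).tendsto x (Metric.ball_mem_nhds _ (by positivity))
    filter_upwards [nhdsWithin_le_nhds hV, self_mem_nhdsWithin] with y hy hyK
    have hymem := hmem y hyK
    rw [hΦval y hymem, hΦval x hxmem]
    have hcoord : ∀ n, ‖((⟨y, hymem⟩ : lp (fun _ : ℕ => ℝ) ⊤) -
        (⟨x, hxmem⟩ : lp (fun _ : ℕ => ℝ) ⊤)) n‖ ≤ ε / 2 := by
      intro n
      have hco : ((⟨y, hymem⟩ : lp (fun _ : ℕ => ℝ) ⊤) -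
          (⟨x, hxmem⟩ : lp (fun _ : ℕ => ℝ) ⊤)) n = y n - x n := rfl
      rw [hco, Real.norm_eq_abs]
      rcases lt_or_ge n N with hn | hn
      · have := hy n hn
        rw [Real.dist_eq] at this
        linarith [this]
      · have hdn : 0 < d n := lt_of_lt_of_le hdN (hmono.monotone hn)
        have hxn := hmarkov x hx n hdn
        have hyn := hmarkov y hyK n hdn
        have hxn0 : 0 ≤ x n := (hx.1 n).1
        have hyn0 : 0 ≤ y n := (hyK.1 n).1
        have hdle : F / d n ≤ F / d N := by
          apply div_le_div_of_nonneg_left hF hdN (hmono.monotone hn)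
        rw [abs_sub_le_iff]
        constructor <;> nlinarith
    have := lp.norm_le_of_forall_le (le_of_lt (show (0:ℝ) < ε/2 by positivity)) hcoord
    calc dist (⟨y, hymem⟩ : lp (fun _ : ℕ => ℝ) ⊤) ⟨x, hxmem⟩
        = ‖(⟨y, hymem⟩ : lp (fun _ : ℕ => ℝ) ⊤) - ⟨x, hxmem⟩‖ := dist_eq_norm _ _
      _ ≤ ε / 2 := this
      _ < ε := by linarith
  -- the target set equals Φ '' K
  have hset : {ρ : lp (fun _ : ℕ => ℝ) ⊤ |
      (∀ n, 0 ≤ ρ n) ∧ HasSum (fun n => ρ n) 1 ∧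
      ∃ S ≤ F, HasSum (fun n => d n * ρ n) S} = Φ '' K := by
    ext ρ
    constructor
    · rintro ⟨hpos, hsum, S, hSF, hS⟩
      have hS0 : 0 ≤ S := hS.nonneg fun n => mul_nonneg (hd0 n) (hpos n)
      refine ⟨(ρ : ℕ → ℝ), ⟨fun n => ⟨hpos n, ?_⟩, fun N => ?_, fun N => ?_, fun N hdn => ?_⟩, ?_⟩
      · exact le_hasSum hsum n fun j _ => hpos j
      · exact sum_le_hasSum _ (fun i _ => hpos i) hsum
      · exact le_trans (sum_le_hasSum _ (fun i _ => mul_nonneg (hd0 i) (hpos i)) hS) hSF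
      · -- tail bound
        have hsummable : Summable (fun n => (ρ : ℕ → ℝ) n) := hsum.summable
        have hsplit : ∑ i ∈ Finset.range N, (ρ : ℕ → ℝ) i + ∑' i, (ρ : ℕ → ℝ) (i + N) = 1 := by
          rw [Summable.sum_add_tsum_nat_add N hsummable, hsum.tsum_eq]
        have htailsummable : Summable (fun i => (ρ : ℕ → ℝ) (i + N)) :=
          (summable_nat_add_iff N).2 hsummable
        have hdsummable : Summable (fun n => d n * (ρ : ℕ → ℝ) n) := hS.summable
        have hdtailsummable : Summable (fun i => d (i + N) * (ρ : ℕ → ℝ) (i + N)) :=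
          (summable_nat_add_iff N).2 hdsummable
        have hdtail : ∑' i, d (i + N) * (ρ : ℕ → ℝ) (i + N) ≤ F := by
          have := Summable.sum_add_tsum_nat_add N hdsummable
          rw [hS.tsum_eq] at this
          have hnn : 0 ≤ ∑ i ∈ Finset.range N, d i * (ρ : ℕ → ℝ) i :=
            Finset.sum_nonneg fun i _ => mul_nonneg (hd0 i) (hpos i)
          linarith
        have hkey : d N * ∑' i, (ρ : ℕ → ℝ) (i + N) ≤ F := by
          rw [← tsum_mul_left]
          refine le_trans (Summable.tsum_le_tsum (fun i => ?_) (htailsummable.mul_left _)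
            hdtailsummable) hdtail
          exact mul_le_mul_of_nonneg_right (hmono.monotone (Nat.le_add_left N i)) (hpos _)
        have : ∑' i, (ρ : ℕ → ℝ) (i + N) ≤ F / d N := by
          rw [le_div_iff₀ hdn, mul_comm]; exact hkey
        linarith
      · rw [hΦval _ ρ.2]
    · rintro ⟨x, hxK, rfl⟩
      obtain ⟨h1, h2, h3, h4⟩ := id hxK
      have hxmem := hmem x hxK
      rw [hΦval x hxmem]
      have hco : ∀ n, ((⟨x, hxmem⟩ : lp (fun _ : ℕ => ℝ) ⊤) : ℕ → ℝ) n = x n := fun n => rfl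
      refine ⟨fun n => (h1 n).1, ?_, ?_⟩
      · -- HasSum x 1
        rw [show (fun n => ((⟨x, hxmem⟩ : lp (fun _ : ℕ => ℝ) ⊤) : ℕ → ℝ) n) = x from rfl]
        rw [hasSum_iff_tendsto_nat_of_nonneg (fun n => (h1 n).1)]
        have hlow : Tendsto (fun N => 1 - F / d N) atTop (𝓝 1) := by
          have : Tendsto (fun N => F / d N) atTop (𝓝 0) :=
            Tendsto.div_atTop tendsto_const_nhds htop
          simpa using tendsto_const_nhds.sub this
        refine tendsto_of_tendsto_of_tendsto_of_le_of_le' hlow tendsto_const_nhds ?_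
          (Eventually.of_forall h2)
        filter_upwards [eventually_gt_atTop 0] with N hN
        exact h4 N (hdpos N hN)
      · -- HasSum (d * x) S for some S ≤ F
        have hsummable : Summable (fun n => d n * x n) :=
          summable_of_sum_range_le (fun n => mul_nonneg (hd0 n) (h1 n).1) h3
        refine ⟨∑' n, d n * x n, Summable.tsum_le_of_sum_range_le hsummable h3, ?_⟩
        simpa [hco] using hsummable.hasSum
  rw [hset]
  exact hKc.image_of_continuousOn hΦcont
end

section
/- A Markov transition kernel P on a measurable space satisfying the Doeblin condition P(x, B) ≥ (1-δ)·Ψ(B) for all x and all measurable B, where 0 < δ < 1 and Ψ is a probability measure, has at most one stationary probability distribution. -/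
/-!
Let `ρ = μ ⊓ ν` be the common part of the two invariant measures. Splitting `μ = ρ + (μ - ρ)`,
invariance gives `μ ≥ Kρ + K(μ - ρ) ≥ Kρ + c (μ - ρ)(univ) Ψ`, and likewise for `ν` with the same
excess mass `(ν - ρ)(univ) = (μ - ρ)(univ)`. Hence `ρ ≥ Kρ + c (μ - ρ)(univ) Ψ`; comparing total
masses, `Kρ` already has the mass of `ρ`, so the excess is zero and `μ = ρ = ν`.
-/

open MeasureTheory ProbabilityTheory Set
open scoped ENNReal

namespace MeasureTheory.Measure

variable {α : Type*} [MeasurableSpace α] {μ ν ρ : Measure α}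

lemma sub_inf_apply_univ_eq [IsFiniteMeasure μ] [IsFiniteMeasure ν] (h : μ univ = ν univ) :
    (μ - μ ⊓ ν) univ = (ν - μ ⊓ ν) univ := by
  have : IsFiniteMeasure (μ ⊓ ν) := isFiniteMeasure_of_le μ inf_le_left
  rw [sub_apply .univ inf_le_left, sub_apply .univ inf_le_right, h]

lemma eq_of_le_of_sub_apply_univ_eq_zero [IsFiniteMeasure ρ] (hρμ : ρ ≤ μ)
    (h : (μ - ρ) univ = 0) : μ = ρ := by
  rw [← sub_add_cancel_of_le hρμ, measure_univ_eq_zero.mp h, zero_add]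

end MeasureTheory.Measure

namespace ProbabilityTheory.Kernel

variable {α β : Type*} [MeasurableSpace α] [MeasurableSpace β]

lemma smul_le_comp_of_forall_smul_le {K : Kernel α β} {Ψ : Measure β} {c : ℝ≥0∞}
    (hK : ∀ x, c • Ψ ≤ K x) (ρ : Measure α) : (ρ univ * c) • Ψ ≤ K ∘ₘ ρ := by
  refine Measure.le_iff.2 fun B hB => ?_
  rw [Measure.smul_apply, smul_eq_mul, Measure.bind_apply hB K.aemeasurable]
  calc ρ univ * c * Ψ B = ∫⁻ _, c * Ψ B ∂ρ := by rw [MeasureTheory.lintegral_const]; ring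
    _ ≤ ∫⁻ x, K x B ∂ρ := lintegral_mono fun x => hK x B

variable {K : Kernel α α} {Ψ : Measure α} {c : ℝ≥0∞}

lemma comp_add_smul_le_of_comp_eq_self (hK : ∀ x, c • Ψ ≤ K x) {μ ρ : Measure α}
    [IsFiniteMeasure ρ] (hρμ : ρ ≤ μ) (hμ : K ∘ₘ μ = μ) :
    K ∘ₘ ρ + ((μ - ρ) univ * c) • Ψ ≤ μ :=
  calc K ∘ₘ ρ + ((μ - ρ) univ * c) • Ψ ≤ K ∘ₘ ρ + K ∘ₘ (μ - ρ) := by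
        gcongr; exact smul_le_comp_of_forall_smul_le hK _
    _ = K ∘ₘ (μ - ρ + ρ) := by rw [Measure.comp_add, add_comm]
    _ = μ := by rw [Measure.sub_add_cancel_of_le hρμ, hμ]

theorem eq_of_comp_eq_self_of_forall_smul_le [IsMarkovKernel K] [NeZero Ψ] (hc : c ≠ 0)
    (hK : ∀ x, c • Ψ ≤ K x) {μ ν : Measure α} [IsFiniteMeasure μ] [IsFiniteMeasure ν]
    (hmass : μ univ = ν univ) (hμ : K ∘ₘ μ = μ) (hν : K ∘ₘ ν = ν) : μ = ν := by
  set ρ := μ ⊓ ν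
  have : IsFiniteMeasure ρ := isFiniteMeasure_of_le μ inf_le_left
  have hρ : K ∘ₘ ρ + ((μ - ρ) univ * c) • Ψ ≤ ρ := by
    refine le_inf (comp_add_smul_le_of_comp_eq_self hK inf_le_left hμ) ?_
    rw [Measure.sub_inf_apply_univ_eq hmass]
    exact comp_add_smul_le_of_comp_eq_self hK inf_le_right hν
  have hexcess : (μ - ρ) univ * c * Ψ univ = 0 := by
    have h := hρ univ
    rw [Measure.add_apply, Measure.comp_apply_univ, Measure.smul_apply, smul_eq_mul] at h
    exact nonpos_iff_eq_zero.1
      (ENNReal.le_of_add_le_add_left (measure_ne_top ρ univ) (by rwa [add_zero]))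
  have hμρ : (μ - ρ) univ = 0 := by simpa [hc, NeZero.ne Ψ] using hexcess
  calc μ = ρ := Measure.eq_of_le_of_sub_apply_univ_eq_zero inf_le_left hμρ
    _ = ν := (Measure.eq_of_le_of_sub_apply_univ_eq_zero inf_le_right
      (Measure.sub_inf_apply_univ_eq hmass ▸ hμρ)).symm

end ProbabilityTheory.Kernel

theorem stmt_11_general {α : Type*} [MeasurableSpace α]
    (δ : ℝ≥0∞) (hδ1 : δ < 1)
    (P : α → Measure α) (Ψ : Measure α)
    [∀ x, IsProbabilityMeasure (P x)] [IsProbabilityMeasure Ψ]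
    (hPmeas : Measurable P)
    (hDoeblin : ∀ x, ∀ B : Set α, MeasurableSet B → (1 - δ) * Ψ B ≤ P x B)
    (μ ν : Measure α) [IsProbabilityMeasure μ] [IsProbabilityMeasure ν]
    (hμ : μ.bind P = μ) (hν : ν.bind P = ν) : μ = ν := by
  let K : Kernel α α := ⟨P, hPmeas⟩
  have : IsMarkovKernel K := ⟨fun x => inferInstanceAs (IsProbabilityMeasure (P x))⟩
  exact K.eq_of_comp_eq_self_of_forall_smul_le (tsub_pos_of_lt hδ1).ne'
    (fun x => Measure.le_iff.2 (hDoeblin x)) (by simp) hμ hν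

theorem stmt_11 {α : Type*} [MeasurableSpace α]
    (δ : ℝ≥0∞) (hδ0 : 0 < δ) (hδ1 : δ < 1)
    (P : α → Measure α) (Ψ : Measure α)
    [∀ x, IsProbabilityMeasure (P x)] [IsProbabilityMeasure Ψ]
    (hPmeas : Measurable P)
    (hDoeblin : ∀ x, ∀ B : Set α, MeasurableSet B → (1 - δ) * Ψ B ≤ P x B)
    (μ ν : Measure α) [IsProbabilityMeasure μ] [IsProbabilityMeasure ν]
    (hμ : μ.bind P = μ) (hν : ν.bind P = ν) : μ = ν :=
  stmt_11_general δ hδ1 P Ψ hPmeas hDoeblin μ ν hμ hν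
end
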